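/- Let H_{a|x}(q) = log₂( 2^{μ_x} α_{a,x} / Π_y [ Σ_{x̃} P_X(x̃) P_{Y|X,A}(y|x̃,a) 2^{q_{a|x̃}} ]^{P_{Y|X,A}(y|x,a)} ) for q ∈ ℝ^{𝒜×𝒳}. Then every partial derivative satisfies ∂H_{ã|x̃}/∂q_{a'|x'} = − 1{ã = a'} Σ_y P_{Y|X,A}(y|x̃,ã) · P_X(x') P_{Y|X,A}(y|x',a') 2^{q_{a'|x'}} / ( Σ_x P_X(x) P_{Y|X,A}(y|x,ã) 2^{q_{ã|x}} ) ≤ 0, the diagonal partial derivative ∂H_{ã|x̃}/∂q_{ã|x̃} is strictly negative, and for every (ã, x̃), Σ_{a', x'} ∂H_{ã|x̃}/∂q_{a'|x'} = −1. -/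

import Mathlib

open Finset

noncomputable section

/-- A probability mass function on a finite alphabet. -/
def IsPMF {α : Type} [Fintype α] (p : α → ℝ) : Prop :=
  (∀ a, 0 ≤ p a) ∧ ∑ a, p a = 1

variable {X Y A : Type} [Fintype X] [Fintype Y] [Fintype A]
  [DecidableEq X] [DecidableEq Y] [DecidableEq A]

/-- The map `H_{a|x}(q) = log₂( 2^{μ_x} α_{a,x} /
Π_y [ Σ_x̃ P_X(x̃) P_{Y|X,A}(y|x̃,a) 2^{q_{a|x̃}} ]^{P_{Y|X,A}(y|x,a)} )`. -/
def Hfun (PX : X → ℝ) (PW : A → X → Y → ℝ) (μ : X → ℝ) (α : A → X → ℝ)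
    (q : A × X → ℝ) (a : A) (x : X) : ℝ :=
  Real.logb 2 ((2 : ℝ) ^ (μ x) * α a x /
    ∏ y, (∑ xt, PX xt * PW a xt y * (2 : ℝ) ^ (q (a, xt))) ^ (PW a x y))

/-- The claimed partial derivative `∂H_{ã|x̃}/∂q_{a'|x'}`. -/
def Hpd (PX : X → ℝ) (PW : A → X → Y → ℝ) (q : A × X → ℝ)
    (at' : A) (xt' : X) (a' : A) (x' : X) : ℝ :=
  -(if at' = a' then (1 : ℝ) else 0) * ∑ y, PW at' xt' y *
    (PX x' * PW a' x' y * (2 : ℝ) ^ (q (a', x')) /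
      (∑ x, PX x * PW at' x y * (2 : ℝ) ^ (q (at', x))))

end

/-!
Taking `log₂` apart, `H_{a|x}(q)` is a constant minus `Σ_y P(y|x,a) log₂ Z_{a,y}(q)` with
`Z_{a,y}(q) = Σ_x̃ P_X(x̃) P(y|x̃,a) 2^{q_{a|x̃}}`, which depends on `q` only through the row
`q_{a|·}`. The derivative of `log₂ Z_{a,y}` in `q_{a|x'}` is a softmax: the posterior weight of `x'`
in `Z_{a,y}`. Hence partial derivatives across rows vanish, and within a row they are minus
`P(·|x,a)`-averages of posterior weights: nonpositive, negative on the diagonal, and summing to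
`-Σ_y P(y|x,a) = -1`.
-/

open Finset Function

theorem IsPMF.exists_pos {α : Type} [Fintype α] {p : α → ℝ} (hp : IsPMF p) : ∃ a, 0 < p a := by
  obtain ⟨a, -, ha⟩ := exists_ne_zero_of_sum_ne_zero (hp.2.symm ▸ one_ne_zero : ∑ a, p a ≠ 0)
  exact ⟨a, (hp.1 a).lt_of_ne' ha⟩

theorem hasDerivAt_logb_sum_mul_rpow_update {ι : Type*} [Fintype ι] [DecidableEq ι] {b : ℝ}
    (hb : 0 < b) (hb1 : b ≠ 1) {w : ι → ℝ} (hw : ∀ i, 0 ≤ w i) (v : ι → ℝ) (j : ι) :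
    HasDerivAt (fun u => Real.logb b (∑ i, w i * b ^ update v j u i))
      (w j * b ^ v j / ∑ i, w i * b ^ v i) (v j) := by
  have hterm : ∀ i, 0 ≤ w i * b ^ v i := fun i => mul_nonneg (hw i) (Real.rpow_pos_of_pos hb _).le
  by_cases hZ : ∑ i, w i * b ^ v i = 0
  -- a vanishing sum forces `w = 0`, and then both sides are junk `0`s
  · have hw0 : w = 0 := funext fun i =>
      (mul_eq_zero.1 ((sum_eq_zero_iff_of_nonneg fun i _ => hterm i).1 hZ i (mem_univ i))
        ).resolve_right (Real.rpow_pos_of_pos hb _).ne'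
    simp only [hw0, Pi.zero_apply, zero_mul, sum_const_zero, Real.logb_zero, zero_div]
    exact hasDerivAt_const _ _
  have hsplit : ∀ u, ∑ i, w i * b ^ update v j u i
      = w j * b ^ u + ∑ i ∈ univ \ {j}, w i * b ^ v i := fun u => by
    rw [← sum_update_of_mem (mem_univ j) (fun i => w i * b ^ v i)]
    exact sum_congr rfl fun i _ => apply_update (fun i t => w i * b ^ t) v j u i
  have hZsplit : ∑ i, w i * b ^ v i = w j * b ^ v j + ∑ i ∈ univ \ {j}, w i * b ^ v i :=
    sum_eq_add_sum_sdiff_singleton_of_mem (mem_univ j) _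
  have hlogb : Real.log b ≠ 0 := Real.log_ne_zero_of_pos_of_ne_one hb hb1
  simp only [hsplit]
  rw [hZsplit] at hZ ⊢
  refine ((((Real.hasStrictDerivAt_const_rpow hb (v j)).hasDerivAt.const_mul (w j)).add_const
    _).log hZ).div_const (Real.log b) |>.congr_deriv ?_
  field_simp

variable {X Y A : Type} [Fintype X] {PX : X → ℝ} {PW : A → X → Y → ℝ}

noncomputable def tiltedOutput (PX : X → ℝ) (PW : A → X → Y → ℝ) (q : A × X → ℝ) (a : A)
    (y : Y) : ℝ :=
  ∑ x, PX x * PW a x y * 2 ^ q (a, x)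

noncomputable def tiltedPosterior (PX : X → ℝ) (PW : A → X → Y → ℝ) (q : A × X → ℝ) (a : A)
    (y : Y) (x : X) : ℝ :=
  PX x * PW a x y * 2 ^ q (a, x) / tiltedOutput PX PW q a y

theorem tiltedOutput_pos (hPX : ∀ x, 0 < PX x) (hPW : ∀ a x y, 0 ≤ PW a x y) (q : A × X → ℝ)
    {a : A} {x : X} {y : Y} (h : 0 < PW a x y) : 0 < tiltedOutput PX PW q a y :=
  sum_pos' (fun x _ => by have := hPX x; have := hPW a x y; positivity)
    ⟨x, mem_univ x, by have := hPX x; positivity⟩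

theorem tiltedPosterior_nonneg (hPX : ∀ x, 0 ≤ PX x) (hPW : ∀ a x y, 0 ≤ PW a x y)
    (q : A × X → ℝ) (a : A) (y : Y) (x : X) : 0 ≤ tiltedPosterior PX PW q a y x := by
  have hS : 0 ≤ tiltedOutput PX PW q a y :=
    sum_nonneg fun x _ => by have := hPX x; have := hPW a x y; positivity
  have := hPX x; have := hPW a x y
  unfold tiltedPosterior; positivity

theorem tiltedPosterior_pos (hPX : ∀ x, 0 < PX x) (hPW : ∀ a x y, 0 ≤ PW a x y)
    (q : A × X → ℝ) {a : A} {x : X} {y : Y} (h : 0 < PW a x y) :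
    0 < tiltedPosterior PX PW q a y x := by
  have := tiltedOutput_pos hPX hPW q h; have := hPX x
  unfold tiltedPosterior; positivity

theorem sum_tiltedPosterior (hPX : ∀ x, 0 < PX x) (hPW : ∀ a x y, 0 ≤ PW a x y)
    (q : A × X → ℝ) {a : A} {x : X} {y : Y} (h : 0 < PW a x y) :
    ∑ x', tiltedPosterior PX PW q a y x' = 1 := by
  simp only [tiltedPosterior, ← sum_div]
  exact div_self (tiltedOutput_pos hPX hPW q h).ne'

theorem Hfun_eq_logb_sub_sum [Fintype Y] (hPX : ∀ x, 0 < PX x) (hPW : ∀ a x y, 0 ≤ PW a x y)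
    {μ : X → ℝ} {α : A → X → ℝ} {a : A} {x : X} (hα : 0 < α a x) (q : A × X → ℝ) :
    Hfun PX PW μ α q a x = Real.logb 2 (2 ^ μ x * α a x)
      - ∑ y, PW a x y * Real.logb 2 (tiltedOutput PX PW q a y) := by
  have hfactor : ∀ y, 0 < tiltedOutput PX PW q a y ^ PW a x y ∧
      Real.logb 2 (tiltedOutput PX PW q a y ^ PW a x y)
        = PW a x y * Real.logb 2 (tiltedOutput PX PW q a y) := fun y => by
    rcases (hPW a x y).eq_or_lt with h | h
    · simp [← h]
    · have hS := tiltedOutput_pos hPX hPW q h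
      exact ⟨Real.rpow_pos_of_pos hS _, Real.logb_rpow_eq_mul_logb_of_pos hS⟩
  change Real.logb 2 (_ / ∏ y, tiltedOutput PX PW q a y ^ PW a x y) = _
  rw [Real.logb_div (mul_pos (Real.rpow_pos_of_pos two_pos _) hα).ne'
    (prod_pos fun y _ => (hfactor y).1).ne', Real.logb_prod _ _ fun y _ => (hfactor y).1.ne']
  exact congrArg _ (sum_congr rfl fun y _ => (hfactor y).2)

theorem Hpd_of_ne [Fintype Y] [DecidableEq A] (q : A × X → ℝ) {a a' : A} (x x' : X)
    (h : a ≠ a') : Hpd PX PW q a x a' x' = 0 := by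
  simp [Hpd, h]

theorem Hpd_self [Fintype Y] [DecidableEq A] (q : A × X → ℝ) (a : A) (x x' : X) :
    Hpd PX PW q a x a x' = -∑ y, PW a x y * tiltedPosterior PX PW q a y x' := by
  simp [Hpd, tiltedPosterior, tiltedOutput]

theorem hasDerivAt_Hfun_update [Fintype Y] [DecidableEq X] [DecidableEq A]
    (hPX : ∀ x, 0 < PX x) (hPW : ∀ a x y, 0 ≤ PW a x y)
    {μ : X → ℝ} {α : A → X → ℝ} (hα : ∀ a x, 0 < α a x) (q : A × X → ℝ) (a : A) (x : X)
    (a' : A) (x' : X) :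
    HasDerivAt (fun u => Hfun PX PW μ α (update q (a', x') u) a x)
      (Hpd PX PW q a x a' x') (q (a', x')) := by
  simp only [Hfun_eq_logb_sub_sum hPX hPW (hα a x)]
  rcases eq_or_ne a a' with rfl | hne
  · have hrow : ∀ u y, tiltedOutput PX PW (update q (a, x') u) a y
        = ∑ x'', PX x'' * PW a x'' y * 2 ^ update (fun x'' => q (a, x'')) x' u x'' := by
      intro u y
      simp only [tiltedOutput, update_apply_of_injective q (Prod.mk_right_injective a)]
    simp only [hrow]
    rw [Hpd_self, ← zero_sub]
    exact (hasDerivAt_const _ _).sub (HasDerivAt.fun_sum fun y _ =>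
      (hasDerivAt_logb_sum_mul_rpow_update two_pos (by norm_num)
        (fun x'' => mul_nonneg (hPX x'').le (hPW a x'' y)) _ x').const_mul _)
  · have hconst : ∀ u y, tiltedOutput PX PW (update q (a', x') u) a y
        = tiltedOutput PX PW q a y := fun u y => by
      simp [tiltedOutput, update_of_ne, hne]
    simpa only [hconst, Hpd_of_ne q x x' hne] using hasDerivAt_const _ _

theorem Hpd_nonpos [Fintype Y] [DecidableEq A] (hPX : ∀ x, 0 ≤ PX x)
    (hPW : ∀ a x y, 0 ≤ PW a x y) (q : A × X → ℝ) (a : A) (x : X) (a' : A) (x' : X) :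
    Hpd PX PW q a x a' x' ≤ 0 := by
  rcases eq_or_ne a a' with rfl | hne
  · rw [Hpd_self, neg_nonpos]
    exact sum_nonneg fun y _ => mul_nonneg (hPW a x y) (tiltedPosterior_nonneg hPX hPW q a y x')
  · exact (Hpd_of_ne q x x' hne).le

theorem Hpd_diag_neg [Fintype Y] [DecidableEq A] (hPX : ∀ x, 0 < PX x)
    (hPW : ∀ a x, IsPMF (PW a x)) (q : A × X → ℝ) (a : A) (x : X) : Hpd PX PW q a x a x < 0 := by
  have hPW' : ∀ a x y, 0 ≤ PW a x y := fun a x => (hPW a x).1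
  obtain ⟨y, hy⟩ := (hPW a x).exists_pos
  rw [Hpd_self, neg_neg_iff_pos]
  exact sum_pos' (fun y _ => mul_nonneg (hPW' a x y)
      (tiltedPosterior_nonneg (fun x => (hPX x).le) hPW' q a y x))
    ⟨y, mem_univ y, mul_pos hy (tiltedPosterior_pos hPX hPW' q hy)⟩

theorem sum_sum_Hpd [Fintype Y] [Fintype A] [DecidableEq A] (hPX : ∀ x, 0 < PX x)
    (hPW : ∀ a x, IsPMF (PW a x)) (q : A × X → ℝ) (a : A) (x : X) :
    ∑ a', ∑ x', Hpd PX PW q a x a' x' = -1 := by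
  have hPW' : ∀ a x y, 0 ≤ PW a x y := fun a x => (hPW a x).1
  have hrow : ∀ y, PW a x y * ∑ x', tiltedPosterior PX PW q a y x' = PW a x y := fun y => by
    rcases (hPW' a x y).eq_or_lt with h | h
    · simp [← h]
    · rw [sum_tiltedPosterior hPX hPW' q h, mul_one]
  rw [Fintype.sum_eq_single a fun a' h => sum_eq_zero fun x' _ => Hpd_of_ne q x x' h.symm]
  simp only [Hpd_self, sum_neg_distrib]
  rw [sum_comm]
  simp only [← mul_sum, hrow, (hPW a x).2]

theorem Hfun_partial_derivatives_general
    {X Y A : Type} [Fintype X] [Fintype Y] [Fintype A]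
    [DecidableEq X] [DecidableEq A]
    (PX : X → ℝ) (PW : A → X → Y → ℝ) (μ : X → ℝ) (α : A → X → ℝ)
    (hPXpos : ∀ x, 0 < PX x)
    (hPW : ∀ a x, IsPMF (PW a x))
    (hα : ∀ a x, 0 < α a x) :
    (∀ (q : A × X → ℝ) (at' : A) (xt' : X) (a' : A) (x' : X),
      HasDerivAt
        (fun u : ℝ => Hfun PX PW μ α (Function.update q (a', x') u) at' xt')
        (Hpd PX PW q at' xt' a' x') (q (a', x')) ∧
      Hpd PX PW q at' xt' a' x' ≤ 0) ∧
    (∀ (q : A × X → ℝ) (at' : A) (xt' : X), Hpd PX PW q at' xt' at' xt' < 0) ∧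
    (∀ (q : A × X → ℝ) (at' : A) (xt' : X),
      ∑ a', ∑ x', Hpd PX PW q at' xt' a' x' = -1) := by
  have hPW' : ∀ a x y, 0 ≤ PW a x y := fun a x => (hPW a x).1
  exact ⟨fun q a x a' x' => ⟨hasDerivAt_Hfun_update hPXpos hPW' hα q a x a' x',
      Hpd_nonpos (fun x => (hPXpos x).le) hPW' q a x a' x'⟩,
    Hpd_diag_neg hPXpos hPW, sum_sum_Hpd hPXpos hPW⟩

/-- The partial derivatives of `H` are given by the stated formula and
are nonpositive; the diagonal partial derivative is strictly negative; and each row of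
partial derivatives sums to `−1`. -/
theorem Hfun_partial_derivatives
    {X Y A : Type} [Fintype X] [Fintype Y] [Fintype A]
    [DecidableEq X] [DecidableEq Y] [DecidableEq A]
    [Nonempty X] [Nonempty Y] [Nonempty A]
    (PX : X → ℝ) (PW : A → X → Y → ℝ) (μ : X → ℝ) (α : A → X → ℝ)
    (hPX : IsPMF PX) (hPXpos : ∀ x, 0 < PX x)
    (hPW : ∀ a x, IsPMF (PW a x))
    (hα : ∀ a x, 0 < α a x) :
    (∀ (q : A × X → ℝ) (at' : A) (xt' : X) (a' : A) (x' : X),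
      HasDerivAt
        (fun u : ℝ => Hfun PX PW μ α (Function.update q (a', x') u) at' xt')
        (Hpd PX PW q at' xt' a' x') (q (a', x')) ∧
      Hpd PX PW q at' xt' a' x' ≤ 0) ∧
    (∀ (q : A × X → ℝ) (at' : A) (xt' : X), Hpd PX PW q at' xt' at' xt' < 0) ∧
    (∀ (q : A × X → ℝ) (at' : A) (xt' : X),
      ∑ a', ∑ x', Hpd PX PW q at' xt' a' x' = -1) :=
  Hfun_partial_derivatives_general PX PW μ α hPXpos hPW hα
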